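/- For every nonzero v ∈ V₄, the subspace F_v := V₂∧V₄∧v of V_{2,4}, spanned by all x∧w∧v with x ∈ V₂ and w ∈ V₄, has dimension 6 and is η_{2,4}-isotropic; hence F_v is a Lagrangian subspace of the 12-dimensional symplectic space (V_{2,4}, η_{2,4}). -/

import Mathlib

/-!
Every generator `x ∧ w ∧ v` of `F_v` ends in `v`, and `v` commutes with the 2-vector `x' ∧ w'`, so
the product of two generators contains `v ∧ v = 0`; hence `F_v ∧ F_v = 0` and `F_v` is
`η`-isotropic. For the dimension, complete `v` to a basis `(w_j)_j, v` of `V₄` and take a basis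
`(x_i)` of `V₂`; as `V = V₂ ⊕ V₄` these vectors form a basis of `V`. The products
`x_i ∧ w_j ∧ v` span `F_v` (those with `w = v` vanish), and they are linearly independent: the
determinant forms `a ∧ b ∧ c ↦ det (x_i^*, w_j^*, v^*)(a, b, c)` built from the dual basis are
biorthogonal to them. So `dim F_v = dim V₂ · (dim V₄ - 1) = 6`.
-/

open ExteriorAlgebra Module

noncomputable section

variable {V : Type*} [AddCommGroup V] [Module ℂ V]

/-- The product of elements of the `j`-th and `k`-th exterior powers lies in the
`(j+k)`-th exterior power. -/
theorem mul_mem_exteriorPower {j k : ℕ} {x y : ExteriorAlgebra ℂ V}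
    (hx : x ∈ ⋀[ℂ]^j V) (hy : y ∈ ⋀[ℂ]^k V) : x * y ∈ ⋀[ℂ]^(j + k) V := by
  rw [exteriorPower, pow_add]
  exact Submodule.mul_mem_mul hx hy

theorem ι_mem_one (a : V) : ι ℂ a ∈ ⋀[ℂ]^1 V := by
  rw [exteriorPower, pow_one]
  exact LinearMap.mem_range_self _ a

theorem triple_mem (a b c : V) : ι ℂ a * ι ℂ b * ι ℂ c ∈ ⋀[ℂ]^3 V :=
  mul_mem_exteriorPower (mul_mem_exteriorPower (ι_mem_one a) (ι_mem_one b)) (ι_mem_one c)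

/-- `⋀³U`: the subspace of the exterior algebra spanned by all `a ∧ b ∧ c` with
`a, b, c ∈ U`. -/
def cube (U : Submodule ℂ V) : Submodule ℂ (ExteriorAlgebra ℂ V) :=
  Submodule.span ℂ {x | ∃ a ∈ U, ∃ b ∈ U, ∃ c ∈ U, x = ι ℂ a * ι ℂ b * ι ℂ c}

/-- `⋀²U₁ ∧ U₂`: the subspace of `⋀³V` spanned by all `a ∧ b ∧ c` with `a, b ∈ U₁`,
`c ∈ U₂`. -/
def wedge21 (U₁ U₂ : Submodule ℂ V) : Submodule ℂ (ExteriorAlgebra ℂ V) :=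
  Submodule.span ℂ {x | ∃ a ∈ U₁, ∃ b ∈ U₁, ∃ c ∈ U₂, x = ι ℂ a * ι ℂ b * ι ℂ c}

/-- `U₁ ∧ ⋀²U₂`: the subspace of `⋀³V` spanned by all `a ∧ b ∧ c` with `a ∈ U₁`,
`b, c ∈ U₂`. -/
def wedge12 (U₁ U₂ : Submodule ℂ V) : Submodule ℂ (ExteriorAlgebra ℂ V) :=
  Submodule.span ℂ {x | ∃ a ∈ U₁, ∃ b ∈ U₂, ∃ c ∈ U₂, x = ι ℂ a * ι ℂ b * ι ℂ c}

theorem cube_le (U : Submodule ℂ V) : cube U ≤ ⋀[ℂ]^3 V := by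
  rw [cube, Submodule.span_le]
  rintro x ⟨a, -, b, -, c, -, rfl⟩
  exact triple_mem a b c

theorem wedge21_le (U₁ U₂ : Submodule ℂ V) : wedge21 U₁ U₂ ≤ ⋀[ℂ]^3 V := by
  rw [wedge21, Submodule.span_le]
  rintro x ⟨a, -, b, -, c, -, rfl⟩
  exact triple_mem a b c

theorem wedge12_le (U₁ U₂ : Submodule ℂ V) : wedge12 U₁ U₂ ≤ ⋀[ℂ]^3 V := by
  rw [wedge12, Submodule.span_le]
  rintro x ⟨a, -, b, -, c, -, rfl⟩
  exact triple_mem a b c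

/-- `F_v = V₂ ∧ V₄ ∧ v`: the subspace spanned by all `x ∧ w ∧ v` with `x ∈ V₂`, `w ∈ V₄`. -/
def Fv24 (V₂ V₄ : Submodule ℂ V) (v : V) : Submodule ℂ (ExteriorAlgebra ℂ V) :=
  Submodule.span ℂ {y | ∃ x ∈ V₂, ∃ w ∈ V₄, y = ι ℂ x * ι ℂ w * ι ℂ v}

theorem Fv24_le (V₂ V₄ : Submodule ℂ V) (v : V) : Fv24 V₂ V₄ v ≤ ⋀[ℂ]^3 V := by
  rw [Fv24, Submodule.span_le]
  rintro y ⟨x, -, w, -, rfl⟩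
  exact triple_mem x w v

universe u

section TripleProducts

variable {R M : Type*} [CommRing R] [AddCommGroup M] [Module R M]

theorem ι_mul_ι_mul_ι_comm (u c d : M) : ι R u * (ι R c * ι R d) = ι R c * ι R d * ι R u := by
  have anticomm (p q : M) : ι R p * ι R q = -(ι R q * ι R p) :=
    eq_neg_of_add_eq_zero_left (ι_add_mul_swap p q)
  rw [← mul_assoc, anticomm u c, neg_mul, mul_assoc, anticomm u d, mul_neg, neg_neg, mul_assoc]

theorem mul_ι_mul_mul_ι_eq_zero (p : ExteriorAlgebra R M) (c d u : M) :
    p * ι R u * (ι R c * ι R d * ι R u) = 0 := by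
  rw [mul_assoc p, ← mul_assoc (ι R u), ι_mul_ι_mul_ι_comm, mul_assoc, ι_sq_zero, mul_zero,
    mul_zero]

def tripleDual (f g h : Dual R M) : ExteriorAlgebra R M →ₗ[R] R :=
  liftAlternating (Pi.single 3 (Matrix.detRowAlternating.compLinearMap (LinearMap.pi ![f, g, h])))

theorem tripleDual_ι_mul_ι_mul_ι (f g h : Dual R M) (a b c : M) :
    tripleDual f g h (ι R a * ι R b * ι R c) =
      Matrix.det !![f a, g a, h a; f b, g b, h b; f c, g c, h c] := by
  have : ι R a * ι R b * ι R c = ιMulti R 3 ![a, b, c] := by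
    simp [ιMulti_apply, mul_assoc]
  rw [this, tripleDual, liftAlternating_apply_ιMulti, Pi.single_eq_same]
  congr 1

theorem linearIndependent_ι_mul_ι_mul_ι {ι₁ ι₂ ι₃ : Type*} (B : Basis (ι₁ ⊕ ι₂ ⊕ ι₃) R M) :
    LinearIndependent R fun t : ι₁ × ι₂ × ι₃ =>
      ι R (B (.inl t.1)) * ι R (B (.inr (.inl t.2.1))) * ι R (B (.inr (.inr t.2.2))) := by
  classical
  let φ (t : ι₁ × ι₂ × ι₃) : Dual R (ExteriorAlgebra R M) :=
    tripleDual (B.coord (.inl t.1)) (B.coord (.inr (.inl t.2.1))) (B.coord (.inr (.inr t.2.2)))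
  have hφ (s t : ι₁ × ι₂ × ι₃) : φ s (ι R (B (.inl t.1)) * ι R (B (.inr (.inl t.2.1))) *
      ι R (B (.inr (.inr t.2.2)))) = if t = s then 1 else 0 := by
    obtain ⟨i, j, k⟩ := s
    obtain ⟨i', j', k'⟩ := t
    -- the three coordinate blocks are disjoint, so the determinant is diagonal
    simp only [φ, tripleDual_ι_mul_ι_mul_ι, Matrix.det_fin_three, Basis.coord_apply,
      Basis.repr_self, Finsupp.single_apply, Sum.inl.injEq, Sum.inr.injEq, reduceCtorEq,
      ↓reduceIte, Matrix.of_apply, Matrix.cons_val', Matrix.cons_val_zero,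
      Matrix.cons_val_fin_one, Matrix.cons_val_one,
      Matrix.cons_val, mul_ite, mul_one, mul_zero, sub_zero, ite_self, add_zero, Prod.mk.injEq]
    split_ifs <;> simp_all
  exact .of_pairwise_dual_eq_zero_one _ φ (fun s t hst => (hφ s t).trans (if_neg hst.symm))
    (fun s => (hφ s s).trans (if_pos rfl))

end TripleProducts

theorem Module.Basis.span_range_coe {R M ι : Type*} [Semiring R] [AddCommMonoid M]
    [Module R M] {p : Submodule R M} (b : Basis ι R p) :
    Submodule.span R (Set.range fun i => (b i : M)) = p := by
  rw [Set.range_comp', ← Submodule.coe_subtype, Submodule.span_image, b.span_eq,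
    Submodule.map_top, Submodule.range_subtype]

theorem exists_basis_sum_unit_inr_eq {K : Type*} {M : Type u} [Field K] [AddCommGroup M]
    [Module K M] {v : M} (hv : v ≠ 0) :
    ∃ (J : Type u) (b : Basis (J ⊕ Unit) K M), b (.inr ()) = v := by
  have hli : LinearIndependent K fun _ : Unit => v := linearIndependent_unique_iff.mpr hv
  refine ⟨_, (Basis.sumExtend hli).reindex (Equiv.sumComm _ _), ?_⟩
  simp [Basis.sumExtend]
  rfl

theorem Fv24_le_wedge12 {V₂ V₄ : Submodule ℂ V} {v : V} (hv : v ∈ V₄) :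
    Fv24 V₂ V₄ v ≤ wedge12 V₂ V₄ :=
  Submodule.span_mono fun _ ⟨x, hx, w, hw, h⟩ => ⟨x, hx, w, hw, v, hv, h⟩

theorem Fv24_mul_self (V₂ V₄ : Submodule ℂ V) (v : V) : Fv24 V₂ V₄ v * Fv24 V₂ V₄ v = ⊥ := by
  rw [Fv24, Submodule.span_mul_span, Submodule.span_eq_bot]
  rintro _ ⟨_, ⟨x, -, w, -, rfl⟩, _, ⟨x', -, w', -, rfl⟩, rfl⟩
  exact mul_ι_mul_mul_ι_eq_zero _ x' w' v

theorem Fv24_eq_map₂ (V₂ V₄ : Submodule ℂ V) (v : V) :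
    Fv24 V₂ V₄ v = Submodule.map₂ (((LinearMap.mul ℂ _).compl₁₂ (ι ℂ) (ι ℂ)).compr₂
      (LinearMap.mulRight ℂ (ι ℂ v))) V₂ V₄ := by
  rw [Submodule.map₂_eq_span_image2, Fv24]
  congr 1
  ext y
  simp [eq_comm]

theorem Fv24_eq_span {ι₁ ι₂ : Type*} {V₂ V₄ : Submodule ℂ V} (b₂ : Basis ι₁ ℂ V₂)
    (b₄ : Basis (ι₂ ⊕ Unit) ℂ V₄) {v : V} (hv : (b₄ (.inr ()) : V) = v) :
    Fv24 V₂ V₄ v = Submodule.span ℂ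
      (Set.range fun t : ι₁ × ι₂ => ι ℂ (b₂ t.1 : V) * ι ℂ (b₄ (.inl t.2) : V) * ι ℂ v) := by
  refine le_antisymm ?_ (Submodule.span_le.mpr ?_)
  · rw [Fv24_eq_map₂]
    conv_lhs => rw [← b₂.span_range_coe, ← b₄.span_range_coe, Submodule.map₂_span_span]
    rw [Submodule.span_le, Set.image2_subset_iff]
    rintro _ ⟨i, rfl⟩ _ ⟨j | _, rfl⟩
    · exact Submodule.subset_span ⟨(i, j), rfl⟩
    · simp [hv, mul_assoc]
  · rintro _ ⟨t, rfl⟩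
    exact Submodule.subset_span ⟨_, (b₂ t.1).2, _, (b₄ (.inl t.2)).2, rfl⟩

theorem finrank_Fv24 {V₂ V₄ : Submodule ℂ V} (hcompl : IsCompl V₂ V₄) [FiniteDimensional ℂ V₂]
    [FiniteDimensional ℂ V₄] {v : V} (hvV₄ : v ∈ V₄) (hv : v ≠ 0) :
    finrank ℂ (Fv24 V₂ V₄ v) = finrank ℂ V₂ * (finrank ℂ V₄ - 1) := by
  obtain ⟨J, b₄, hb₄⟩ :=
    exists_basis_sum_unit_inr_eq (K := ℂ) (v := (⟨v, hvV₄⟩ : V₄)) (by simpa using hv)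
  have : Finite (J ⊕ Unit) := Module.Finite.finite_basis b₄
  have : Finite J := .of_injective _ (Sum.inl_injective (β := Unit))
  have : Fintype J := .ofFinite J
  let B := ((finBasis ℂ V₂).prod b₄).map (Submodule.prodEquivOfIsCompl V₂ V₄ hcompl)
  have hli := (linearIndependent_ι_mul_ι_mul_ι B).comp (fun t : Fin _ × J => (t.1, t.2, ()))
    fun s t h => by simpa [Prod.ext_iff] using h
  rw [Fv24_eq_span (finBasis ℂ V₂) b₄ (congrArg Subtype.val hb₄)]
  rw [finrank_span_eq_card (by simpa [B, Function.comp_def, hb₄] using hli)]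
  simp [finrank_eq_card_basis b₄]

theorem statement9_general (V : Type*) [AddCommGroup V] [Module ℂ V]
    (vol : (⋀[ℂ]^6 V) →ₗ[ℂ] ℂ)
    (V₂ V₄ : Submodule ℂ V) (hV₂ : finrank ℂ V₂ = 2) (hV₄ : finrank ℂ V₄ = 4)
    (hcompl : IsCompl V₂ V₄)
    (v : V) (hvV₄ : v ∈ V₄) (hv : v ≠ 0) :
    Fv24 V₂ V₄ v ≤ wedge12 V₂ V₄ ∧
    finrank ℂ ↥(Fv24 V₂ V₄ v) = 6 ∧
    (∀ x (hx : x ∈ Fv24 V₂ V₄ v) y (hy : y ∈ Fv24 V₂ V₄ v),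
      vol ⟨x * y, mul_mem_exteriorPower (Fv24_le V₂ V₄ v hx) (Fv24_le V₂ V₄ v hy)⟩ = 0) := by
  have : FiniteDimensional ℂ V₂ := Module.finite_of_finrank_pos (by omega)
  have : FiniteDimensional ℂ V₄ := Module.finite_of_finrank_pos (by omega)
  refine ⟨Fv24_le_wedge12 hvV₄, by rw [finrank_Fv24 hcompl hvV₄ hv, hV₂, hV₄], fun x hx y hy => ?_⟩
  have hxy : x * y = 0 := by
    simpa [Fv24_mul_self] using Submodule.mul_mem_mul hx hy
  exact (congrArg vol (Subtype.ext hxy)).trans (map_zero vol)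

/-- Let `V = V₂ ⊕ V₄` with `dim V₂ = 2`, `dim V₄ = 4`. For every nonzero
`v ∈ V₄`, the subspace `F_v = V₂ ∧ V₄ ∧ v` of `V_{2,4} = V₂ ∧ ⋀²V₄` has dimension 6 and is
`η_{2,4}`-isotropic; hence it is a Lagrangian subspace of the 12-dimensional symplectic
space `(V_{2,4}, η_{2,4})`. -/
theorem statement9 (V : Type*) [AddCommGroup V] [Module ℂ V] [FiniteDimensional ℂ V]
    (h6 : finrank ℂ V = 6)
    (vol : (⋀[ℂ]^6 V) →ₗ[ℂ] ℂ) (hvol : vol ≠ 0)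
    (V₂ V₄ : Submodule ℂ V) (hV₂ : finrank ℂ V₂ = 2) (hV₄ : finrank ℂ V₄ = 4)
    (hcompl : IsCompl V₂ V₄)
    (v : V) (hvV₄ : v ∈ V₄) (hv : v ≠ 0) :
    Fv24 V₂ V₄ v ≤ wedge12 V₂ V₄ ∧
    finrank ℂ ↥(Fv24 V₂ V₄ v) = 6 ∧
    (∀ x (hx : x ∈ Fv24 V₂ V₄ v) y (hy : y ∈ Fv24 V₂ V₄ v),
      vol ⟨x * y, mul_mem_exteriorPower (Fv24_le V₂ V₄ v hx) (Fv24_le V₂ V₄ v hy)⟩ = 0) :=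
  statement9_general V vol V₂ V₄ hV₂ hV₄ hcompl v hvV₄ hv
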